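/- Let m ∈ ℕ, M, N ∈ ℕ, c ∈ ℂ*, and let a₁,…,a_M, b₁,…,b_N ∈ ℂ* be such that the multisets {a₁,…,a_M} and {b₁,…,b_N} are disjoint. Define the rational function f(z) = c·z^{-(m+3)}·∏_{j=1}^{M}(z-a_j) / ∏_{j=1}^{N}(z-b_j). If f(-1/conj(z)) = -conj(z⁴·f(z)) for every z ∈ ℂ* at which both sides are defined, then 2 + 2m - M + N = 0 (equivalently M - N = 2m + 2) and conj(c)·(-1)^m·∏_{j=1}^{N} b_j = c·∏_{j=1}^{M} a_j. -/

import Mathlib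

/-!
Conjugating the functional equation and clearing denominators turns it into the polynomial
identity
`z ^ (2m+2+N) · conj c (-1)^m ∏ (1 + conj aⱼ z) ∏ (bⱼ - z) = z ^ M · c ∏ (aⱼ - z) ∏ (1 + conj bⱼ z)`,
which holds at all but finitely many `z`, hence identically. Since `c`, the `aⱼ` and the `bⱼ` are nonzero,
neither cofactor of a power of `z` vanishes at `0`; comparing orders of vanishing at `0` gives
`2m + 2 + N = M`, and comparing the cofactors at `0` gives the condition on `c`.
-/

open Finset Polynomial

namespace Polynomial

theorem eq_of_eval_eq_of_eval_ne_zero {R : Type*} [CommRing R] [IsDomain R] [Infinite R]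
    {p q r : R[X]} (hr : r ≠ 0) (h : ∀ x, r.eval x ≠ 0 → p.eval x = q.eval x) : p = q :=
  eq_of_infinite_eval_eq p q <| (finite_setOfPred_isRoot hr).infinite_compl.mono fun x hx => h x hx

theorem eq_of_X_pow_mul_eq_X_pow_mul {R : Type*} [Semiring R] {p q : R[X]} {k l : ℕ}
    (hp : p.coeff 0 ≠ 0) (hq : q.coeff 0 ≠ 0) (h : X ^ k * p = X ^ l * q) : k = l ∧ p = q := by
  have hkl : k = l := by
    have := congrArg natTrailingDegree h
    rwa [X_pow_mul, X_pow_mul, natTrailingDegree_mul_X_pow (fun h0 => hp (by simp [h0])),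
      natTrailingDegree_mul_X_pow (fun h0 => hq (by simp [h0])),
      natTrailingDegree_eq_zero.2 (.inr hp), natTrailingDegree_eq_zero.2 (.inr hq),
      zero_add, zero_add] at this
  subst hkl
  exact ⟨rfl, (isRegular_X_pow k).left h⟩

end Polynomial

theorem prod_sub_swap {R ι : Type*} [CommRing R] [Fintype ι] (w : ι → R) (z : R) :
    ∏ i, (z - w i) = (-1) ^ Fintype.card ι * ∏ i, (w i - z) := by
  rw [← card_univ, ← prod_neg]
  simp

theorem prod_neg_one_div_sub {K ι : Type*} [Field K] [Fintype ι] (w : ι → K) {z : K}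
    (hz : z ≠ 0) :
    ∏ i, (-1 / z - w i) = (-1) ^ Fintype.card ι * (∏ i, (1 + w i * z)) / z ^ Fintype.card ι := by
  calc ∏ i, (-1 / z - w i) = ∏ i, -(1 + w i * z) / z :=
        prod_congr rfl fun i _ => by field_simp; ring
    _ = _ := by rw [prod_div_distrib, prod_neg, prod_const, card_univ]

section Antipodal

variable {ι κ : Type*} [Fintype ι] [Fintype κ] (m : ℕ) (c : ℂ) (a : ι → ℂ) (b : κ → ℂ)
  (f : ℂ → ℂ) (hf : ∀ z : ℂ, f z = c * (z ^ (m + 3))⁻¹ * (∏ j, (z - a j)) / (∏ j, (z - b j)))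
  (heq : ∀ z : ℂ, z ≠ 0 → (∀ j, z ≠ b j) → (∀ j, -1 / starRingEnd ℂ z ≠ b j) →
    f (-1 / starRingEnd ℂ z) = -starRingEnd ℂ (z ^ 4 * f z))

include hf heq

theorem antipodal_eq_clear_denominators {z : ℂ} (hz : z ≠ 0) (hB : ∏ j, (b j - z) ≠ 0)
    (hB' : ∏ j, (1 + starRingEnd ℂ (b j) * z) ≠ 0) :
    z ^ (2 * m + 2 + Fintype.card κ) * (starRingEnd ℂ c * (-1) ^ m *
      (∏ j, (1 + starRingEnd ℂ (a j) * z)) * ∏ j, (b j - z)) =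
    z ^ Fintype.card ι * (c * (∏ j, (a j - z)) * ∏ j, (1 + starRingEnd ℂ (b j) * z)) := by
  have hzb : ∀ j, z ≠ b j := fun j => (sub_ne_zero.1 (prod_ne_zero_iff.1 hB j (mem_univ j))).symm
  have hzb' : ∀ j, -1 / starRingEnd ℂ z ≠ b j := by
    intro j h
    apply prod_ne_zero_iff.1 hB' j (mem_univ j)
    rw [← h]
    simp only [map_div₀, map_neg, map_one, Complex.conj_conj]
    field_simp
    ring
  have h := congrArg (starRingEnd ℂ) (heq z hz hzb hzb')
  simp only [hf, map_div₀, map_mul, map_neg, map_one, map_inv₀, map_pow, map_prod, map_sub,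
    Complex.conj_conj] at h
  rw [prod_neg_one_div_sub _ hz, prod_neg_one_div_sub _ hz, prod_sub_swap a, prod_sub_swap b] at h
  generalize ∏ j, (a j - z) = A, ∏ j, (b j - z) = B, ∏ j, (1 + starRingEnd ℂ (a j) * z) = A',
    ∏ j, (1 + starRingEnd ℂ (b j) * z) = B', Fintype.card ι = M, Fintype.card κ = N at *
  rw [neg_div, neg_pow, div_pow, one_pow] at h
  field_simp at h ⊢
  have hsign : ((-1 : ℂ) ^ m) ^ 2 = 1 := by rw [← pow_mul, pow_mul', neg_one_sq, one_pow]
  apply mul_left_cancel₀ (pow_ne_zero 4 hz)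
  linear_combination (-1) ^ m * h + z ^ (M + 4) * B' * c * A * hsign

theorem antipodal_eq_polynomial_identity :
    X ^ (2 * m + 2 + Fintype.card κ) * (C (starRingEnd ℂ c * (-1) ^ m) *
      (∏ j, (1 + C (starRingEnd ℂ (a j)) * X)) * ∏ j, (C (b j) - X)) =
    X ^ Fintype.card ι * (C c * (∏ j, (C (a j) - X)) * ∏ j, (1 + C (starRingEnd ℂ (b j)) * X)) := by
  have hB : ∏ j, (C (b j) - X) ≠ 0 :=
    prod_ne_zero_iff.2 fun j _ => by rw [← neg_sub]; exact neg_ne_zero.2 (X_sub_C_ne_zero _)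
  have hB' : ∏ j, (1 + C (starRingEnd ℂ (b j)) * X) ≠ 0 :=
    prod_ne_zero_iff.2 fun j _ h => by simpa using congrArg (eval 0) h
  refine eq_of_eval_eq_of_eval_ne_zero (mul_ne_zero (mul_ne_zero X_ne_zero hB) hB') fun z hz => ?_
  simp only [eval_mul, eval_X, eval_prod, eval_sub, eval_add, eval_one, eval_C,
    mul_ne_zero_iff] at hz
  simpa [eval_prod] using antipodal_eq_clear_denominators m c a b f hf heq hz.1.1 hz.1.2 hz.2

end Antipodal

theorem generalized_henneberg_degree_and_constant_condition
    (m M N : ℕ) (c : ℂ) (hc : c ≠ 0)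
    (a : Fin M → ℂ) (b : Fin N → ℂ)
    (ha : ∀ j, a j ≠ 0) (hb : ∀ j, b j ≠ 0)
    (f : ℂ → ℂ)
    (hf : ∀ z : ℂ, f z =
      c * (z ^ (m + 3))⁻¹ * (∏ j, (z - a j)) / (∏ j, (z - b j)))
    (heq : ∀ z : ℂ, z ≠ 0 → (∀ j, z ≠ b j) →
      (∀ j, -1 / (starRingEnd ℂ) z ≠ b j) →
      f (-1 / (starRingEnd ℂ) z) = -(starRingEnd ℂ) (z ^ 4 * f z)) :
    (2 : ℤ) + 2 * m - M + N = 0 ∧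
    (starRingEnd ℂ) c * (-1) ^ m * ∏ j, b j = c * ∏ j, a j := by
  have hpoly := antipodal_eq_polynomial_identity m c a b f hf heq
  rw [Fintype.card_fin, Fintype.card_fin] at hpoly
  set P : ℂ[X] := C (starRingEnd ℂ c * (-1) ^ m) *
    (∏ j, (1 + C (starRingEnd ℂ (a j)) * X)) * ∏ j, (C (b j) - X)
  set Q : ℂ[X] := C c * (∏ j, (C (a j) - X)) * ∏ j, (1 + C (starRingEnd ℂ (b j)) * X)
  have hP : P.coeff 0 = starRingEnd ℂ c * (-1) ^ m * ∏ j, b j := by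
    simp [P, coeff_zero_eq_eval_zero, eval_prod]
  have hQ : Q.coeff 0 = c * ∏ j, a j := by
    simp [Q, coeff_zero_eq_eval_zero, eval_prod]
  obtain ⟨hdeg, hPQ⟩ := eq_of_X_pow_mul_eq_X_pow_mul
    (hP ▸ by simp [hc, hb, prod_eq_zero_iff]) (hQ ▸ by simp [hc, ha, prod_eq_zero_iff]) hpoly
  exact ⟨by omega, hP.symm.trans (hPQ ▸ hQ)⟩
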